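/- arXiv:0710.5025 — 3 statements merged into one kernel-verified Lean document; each statement's English description precedes it below -/
import Mathlib

section
/- Let a, b > 0 with a + b = 1, and let A, B ⊆ ℝⁿ be bounded measurable sets. Then vol(A)^a · vol(B)^b ≤ vol(aA + bB), where aA + bB = {a·x + b·y : x ∈ A, y ∈ B} and vol denotes Lebesgue (outer) measure. -/
/-!
The proof goes through the one-dimensional Prékopa–Leindler inequality. In dimension one,
Brunn–Minkowski in additive form, `vol F + vol G ≤ vol (F + G)`, holds because `F` and `G` can be
translated so that they touch at a single point while both stay inside `F + G`. If `f` and `g`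
are rescaled to have supremum `1`, then for every level `0 < l < 1` their superlevel sets are
nonempty, and `a • {f > l} + b • {g > l} ⊆ {h > l}`. Integrating over `l` (layer cake) gives
`a ∫ f + b ∫ g ≤ ∫ h`, and weighted AM–GM then gives `(∫ f)^a (∫ g)^b ≤ ∫ h`.

For sets in `ℝ × E` the fibre volumes `r ↦ vol A_r`, `s ↦ vol B_s`, `t ↦ vol C_t` of `A`, `B` and
`C = a • A + b • B` satisfy the Prékopa–Leindler hypothesis by Brunn–Minkowski in `E`, because
`a • A_r + b • B_s ⊆ C_(a r + b s)`. By Fubini their integrals are `vol A`, `vol B` and `vol C`,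
and induction on the dimension finishes the proof.
-/

open MeasureTheory Set
open scoped ENNReal NNReal Pointwise

theorem ENNReal.geom_mean_le_arith_mean2_weighted {a b : ℝ} (ha : 0 < a) (hb : 0 < b)
    (hab : a + b = 1) (x y : ℝ≥0∞) :
    x ^ a * y ^ b ≤ ENNReal.ofReal a * x + ENNReal.ofReal b * y := by
  rcases eq_or_ne x ∞ with rfl | hx
  · simp [ha]
  rcases eq_or_ne y ∞ with rfl | hy
  · simp [hb]
  lift x to ℝ≥0 using hx
  lift y to ℝ≥0 using hy
  have := NNReal.geom_mean_le_arith_mean2_weighted a.toNNReal b.toNNReal x y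
    (by rw [← Real.toNNReal_add ha.le hb.le, hab, Real.toNNReal_one])
  rw [Real.coe_toNNReal _ ha.le, Real.coe_toNNReal _ hb.le] at this
  rw [← ENNReal.coe_rpow_of_nonneg _ ha.le, ← ENNReal.coe_rpow_of_nonneg _ hb.le]
  simpa only [ENNReal.ofReal, ← ENNReal.coe_mul, ← ENNReal.coe_add, ENNReal.coe_le_coe]

theorem Real.volume_setOf_pos_and_ofReal_lt (c : ℝ≥0∞) :
    volume {l : ℝ | 0 < l ∧ ENNReal.ofReal l < c} = c := by
  rcases eq_or_ne c ∞ with rfl | hc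
  · simp only [ENNReal.ofReal_lt_top, and_true]
    exact Real.volume_Ioi
  · have : {l : ℝ | 0 < l ∧ ENNReal.ofReal l < c} = Ioo 0 c.toReal := by
      ext l
      simp only [mem_ofPred_eq, mem_Ioo, and_congr_right_iff]
      exact fun hl => ENNReal.ofReal_lt_iff_lt_toReal hl.le hc
    rw [this, Real.volume_Ioo, sub_zero, ENNReal.ofReal_toReal hc]

theorem MeasureTheory.lintegral_eq_lintegral_meas_ofReal_lt {α : Type*} [MeasurableSpace α]
    (μ : Measure α) [SFinite μ] {φ : α → ℝ≥0∞} (hφ : Measurable φ) :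
    ∫⁻ x, φ x ∂μ = ∫⁻ l in Ioi 0, μ {x | ENNReal.ofReal l < φ x} := by
  have hS : MeasurableSet {p : ℝ × α | ENNReal.ofReal p.1 < φ p.2} :=
    measurableSet_lt (ENNReal.measurable_ofReal.comp measurable_fst) (hφ.comp measurable_snd)
  refine Eq.trans ?_
    ((Measure.prod_apply_symm (μ := volume.restrict (Ioi (0 : ℝ))) hS).symm.trans
      (Measure.prod_apply hS))
  refine lintegral_congr fun x => ?_
  rw [Measure.restrict_apply' measurableSet_Ioi, ← Real.volume_setOf_pos_and_ofReal_lt (φ x),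
    inter_comm]
  rfl

theorem Metric.monotone_inter_closedBall_nat {X : Type*} [PseudoMetricSpace X] (s : Set X)
    (z : X) : Monotone fun n : ℕ => s ∩ Metric.closedBall z n := fun _ _ hmn =>
  inter_subset_inter_right s (Metric.closedBall_subset_closedBall (by exact_mod_cast hmn))

theorem MeasureTheory.measure_eq_iSup_measure_inter_closedBall {X : Type*}
    [PseudoMetricSpace X] [MeasurableSpace X] (μ : Measure X) (s : Set X) (z : X) :
    μ s = ⨆ n : ℕ, μ (s ∩ Metric.closedBall z n) := by
  rw [← (Metric.monotone_inter_closedBall_nat s z).measure_iUnion, ← inter_iUnion,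
    Metric.iUnion_closedBall_nat, inter_univ]

namespace Real

theorem volume_le_volume_inter_Iic_add {F : Set ℝ} (hF : BddAbove F) (x : ℝ) :
    volume F ≤ volume (F ∩ Iic x) + ENNReal.ofReal (sSup F - x) :=
  calc volume F ≤ volume (F ∩ Iic x ∪ Ioc x (sSup F)) :=
        measure_mono fun u hu => (le_or_gt u x).imp (⟨hu, ·⟩) (⟨·, le_csSup hF hu⟩)
    _ ≤ volume (F ∩ Iic x) + ENNReal.ofReal (sSup F - x) := by
        rw [← volume_Ioc]; exact measure_union_le _ _

theorem volume_le_volume_inter_Ici_add {G : Set ℝ} (hG : BddBelow G) (y : ℝ) :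
    volume G ≤ volume (G ∩ Ici y) + ENNReal.ofReal (y - sInf G) :=
  calc volume G ≤ volume (G ∩ Ici y ∪ Ico (sInf G) y) :=
        measure_mono fun v hv => (le_or_gt y v).imp (⟨hv, ·⟩) (⟨csInf_le hG hv, ·⟩)
    _ ≤ volume (G ∩ Ici y) + ENNReal.ofReal (y - sInf G) := by
        rw [← volume_Ico]; exact measure_union_le _ _

theorem volume_inter_Iic_add_volume_inter_Ici_le {F G : Set ℝ} (hG : MeasurableSet G)
    {x y : ℝ} (hx : x ∈ F) (hy : y ∈ G) :
    volume (F ∩ Iic x) + volume (G ∩ Ici y) ≤ volume (F + G) := by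
  have hdisj : AEDisjoint volume ((· + y) '' (F ∩ Iic x)) ((x + ·) '' (G ∩ Ici y)) := by
    refine measure_mono_null (t := {x + y}) ?_ (measure_singleton _)
    rintro _ ⟨⟨u, ⟨-, hu⟩, rfl⟩, ⟨v, ⟨-, hv⟩, huv⟩⟩
    simp only [mem_Iic, mem_Ici] at hu hv huv
    simp only [mem_singleton_iff]
    linarith
  calc volume (F ∩ Iic x) + volume (G ∩ Ici y)
      = volume ((· + y) '' (F ∩ Iic x)) + volume ((x + ·) '' (G ∩ Ici y)) := by
        rw [image_add_right, measure_preimage_add_right, image_add_left, measure_preimage_add]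
    _ = volume ((· + y) '' (F ∩ Iic x) ∪ (x + ·) '' (G ∩ Ici y)) := by
        refine (measure_union₀ ?_ hdisj).symm
        rw [image_add_left]
        exact ((hG.inter measurableSet_Ici).preimage (measurable_const_add _)).nullMeasurableSet
    _ ≤ volume (F + G) := by
        refine measure_mono (union_subset ?_ ?_)
        · rintro _ ⟨u, ⟨hu, -⟩, rfl⟩; exact add_mem_add hu hy
        · rintro _ ⟨v, ⟨hv, -⟩, rfl⟩; exact add_mem_add hx hv

theorem volume_add_volume_le_volume_add_of_bddAbove_of_bddBelow {F G : Set ℝ}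
    (hFb : BddAbove F) (hGb : BddBelow G) (hF : F.Nonempty) (hG : G.Nonempty)
    (hGm : MeasurableSet G) : volume F + volume G ≤ volume (F + G) := by
  refine ENNReal.le_of_forall_pos_le_add fun ε hε _ => ?_
  have hε2 : (0 : ℝ) < ε / 2 := by positivity
  obtain ⟨x, hxF, hx⟩ := exists_lt_of_lt_csSup hF (sub_lt_self (sSup F) hε2)
  obtain ⟨y, hyG, hy⟩ := exists_lt_of_csInf_lt hG (lt_add_of_pos_right (sInf G) hε2)
  calc volume F + volume G
      ≤ (volume (F ∩ Iic x) + ENNReal.ofReal (sSup F - x)) +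
          (volume (G ∩ Ici y) + ENNReal.ofReal (y - sInf G)) :=
        add_le_add (volume_le_volume_inter_Iic_add hFb x) (volume_le_volume_inter_Ici_add hGb y)
    _ = (volume (F ∩ Iic x) + volume (G ∩ Ici y)) +
          ENNReal.ofReal ((sSup F - x) + (y - sInf G)) := by
        rw [ENNReal.ofReal_add (sub_nonneg.2 (le_csSup hFb hxF)) (sub_nonneg.2 (csInf_le hGb hyG))]
        ring
    _ ≤ volume (F + G) + ε := by
        gcongr
        · exact volume_inter_Iic_add_volume_inter_Ici_le hGm hxF hyG
        · rw [← ENNReal.ofReal_coe_nnreal]; gcongr; linarith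

theorem volume_add_volume_le_volume_add {F G : Set ℝ} (hF : F.Nonempty) (hG : G.Nonempty)
    (hGm : MeasurableSet G) : volume F + volume G ≤ volume (F + G) := by
  obtain ⟨x, hx⟩ := hF
  obtain ⟨y, hy⟩ := hG
  have hmono (s : Set ℝ) (z : ℝ) :
      Monotone fun n : ℕ => volume (s ∩ Metric.closedBall z n) :=
    fun _ _ hmn => measure_mono (Metric.monotone_inter_closedBall_nat s z hmn)
  rw [measure_eq_iSup_measure_inter_closedBall volume F x,
    measure_eq_iSup_measure_inter_closedBall volume G y,
    ENNReal.iSup_add_iSup_of_monotone (hmono F x) (hmono G y)]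
  refine iSup_le fun n => (volume_add_volume_le_volume_add_of_bddAbove_of_bddBelow
    (Metric.isBounded_closedBall.subset inter_subset_right).bddAbove
    (Metric.isBounded_closedBall.subset inter_subset_right).bddBelow
    ⟨x, hx, Metric.mem_closedBall_self n.cast_nonneg⟩
    ⟨y, hy, Metric.mem_closedBall_self n.cast_nonneg⟩
    (hGm.inter measurableSet_closedBall)).trans ?_
  exact measure_mono (add_subset_add inter_subset_left inter_subset_left)

end Real

theorem smul_setOf_lt_add_smul_setOf_lt_subset {E : Type*} [AddCommMonoid E] [Module ℝ E]
    {a b : ℝ} (ha : 0 < a) (hb : 0 < b) (hab : a + b = 1) {f g h : E → ℝ≥0∞}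
    (hfgh : ∀ x y, f x ^ a * g y ^ b ≤ h (a • x + b • y)) (c : ℝ≥0∞) :
    a • {x | c < f x} + b • {y | c < g y} ⊆ {z | c < h z} := by
  rintro _ ⟨_, ⟨x, hx, rfl⟩, _, ⟨y, hy, rfl⟩, rfl⟩
  calc c = c ^ a * c ^ b := by
        rw [← ENNReal.rpow_add_of_nonneg a b ha.le hb.le, hab, ENNReal.rpow_one]
    _ < f x ^ a * g y ^ b :=
        ENNReal.mul_lt_mul (ENNReal.rpow_lt_rpow hx ha) (ENNReal.rpow_lt_rpow hy hb)
    _ ≤ h (a • x + b • y) := hfgh x y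

namespace Real

variable {a b : ℝ} {f g h : ℝ → ℝ≥0∞}

theorem prekopa_leindler_additive (ha : 0 < a) (hb : 0 < b) (hab : a + b = 1)
    (hf : Measurable f) (hg : Measurable g) (hh : Measurable h) (hfg : ⨆ x, f x = ⨆ y, g y)
    (hfgh : ∀ x y, f x ^ a * g y ^ b ≤ h (a • x + b • y)) :
    ENNReal.ofReal a * (∫⁻ x, f x) + ENNReal.ofReal b * ∫⁻ y, g y ≤ ∫⁻ z, h z := by
  have hlevel (l : ℝ) : ENNReal.ofReal a * volume {x | ENNReal.ofReal l < f x} +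
      ENNReal.ofReal b * volume {y | ENNReal.ofReal l < g y} ≤
      volume {z | ENNReal.ofReal l < h z} := by
    set c := ENNReal.ofReal l
    by_cases hc : c < ⨆ x, f x
    · have hF : {x | c < f x}.Nonempty := lt_iSup_iff.1 hc
      have hG : {y | c < g y}.Nonempty := lt_iSup_iff.1 (hc.trans_eq hfg)
      calc ENNReal.ofReal a * volume {x | c < f x} + ENNReal.ofReal b * volume {y | c < g y}
          = volume (a • {x | c < f x}) + volume (b • {y | c < g y}) := by
            simp only [Measure.addHaar_smul_of_nonneg volume ha.le,
              Measure.addHaar_smul_of_nonneg volume hb.le, Module.finrank_self, pow_one]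
        _ ≤ volume (a • {x | c < f x} + b • {y | c < g y}) :=
            volume_add_volume_le_volume_add hF.smul_set hG.smul_set
              ((measurableSet_lt measurable_const hg).const_smul₀ b)
        _ ≤ volume {z | c < h z} :=
            measure_mono (smul_setOf_lt_add_smul_setOf_lt_subset ha hb hab hfgh c)
    · have hF : {x | c < f x} = ∅ := eq_empty_of_forall_notMem fun x hx =>
        hc (hx.trans_le (le_iSup f x))
      have hG : {y | c < g y} = ∅ := eq_empty_of_forall_notMem fun y hy =>
        hc (hy.trans_le (hfg ▸ le_iSup g y))
      simp [hF, hG]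
  calc ENNReal.ofReal a * (∫⁻ x, f x) + ENNReal.ofReal b * ∫⁻ y, g y
      = (∫⁻ l in Ioi 0, ENNReal.ofReal a * volume {x | ENNReal.ofReal l < f x}) +
          ∫⁻ l in Ioi 0, ENNReal.ofReal b * volume {y | ENNReal.ofReal l < g y} := by
        rw [lintegral_eq_lintegral_meas_ofReal_lt _ hf, lintegral_eq_lintegral_meas_ofReal_lt _ hg,
          lintegral_const_mul' _ _ ENNReal.ofReal_ne_top,
          lintegral_const_mul' _ _ ENNReal.ofReal_ne_top]
    _ ≤ ∫⁻ l in Ioi 0, (ENNReal.ofReal a * volume {x | ENNReal.ofReal l < f x} +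
          ENNReal.ofReal b * volume {y | ENNReal.ofReal l < g y}) := le_lintegral_add _ _
    _ ≤ ∫⁻ l in Ioi 0, volume {z | ENNReal.ofReal l < h z} := lintegral_mono hlevel
    _ = ∫⁻ z, h z := (lintegral_eq_lintegral_meas_ofReal_lt _ hh).symm

theorem prekopa_leindler (ha : 0 < a) (hb : 0 < b) (hab : a + b = 1)
    (hf : Measurable f) (hg : Measurable g) (hh : Measurable h)
    (hf_top : ⨆ x, f x ≠ ∞) (hg_top : ⨆ y, g y ≠ ∞)
    (hfgh : ∀ x y, f x ^ a * g y ^ b ≤ h (a • x + b • y)) :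
    (∫⁻ x, f x) ^ a * (∫⁻ y, g y) ^ b ≤ ∫⁻ z, h z := by
  set M := ⨆ x, f x
  set N := ⨆ y, g y
  rcases eq_or_ne M 0 with hM | hM
  · simp [show f = 0 from funext (ENNReal.iSup_eq_zero.1 hM), ENNReal.zero_rpow_of_pos ha]
  rcases eq_or_ne N 0 with hN | hN
  · simp [show g = 0 from funext (ENNReal.iSup_eq_zero.1 hN), ENNReal.zero_rpow_of_pos hb]
  -- Rescale `f` and `g` to supremum `1` and `h` compatibly; then the additive form applies.
  set c := M⁻¹ ^ a * N⁻¹ ^ b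
  have hM_inv : M⁻¹ ≠ ∞ := ENNReal.inv_ne_top.2 hM
  have hN_inv : N⁻¹ ≠ ∞ := ENNReal.inv_ne_top.2 hN
  have hc : c ≠ 0 := by simp [c, hf_top, hg_top, hM, hN]
  have hc_top : c ≠ ∞ :=
    ENNReal.mul_ne_top (ENNReal.rpow_ne_top_of_nonneg ha.le hM_inv)
      (ENNReal.rpow_ne_top_of_nonneg hb.le hN_inv)
  have hnorm := prekopa_leindler_additive ha hb hab (f := fun x => M⁻¹ * f x)
    (g := fun y => N⁻¹ * g y) (h := fun z => c * h z) (hf.const_mul _) (hg.const_mul _)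
    (hh.const_mul _)
    (by rw [← ENNReal.mul_iSup, ← ENNReal.mul_iSup, ENNReal.inv_mul_cancel hM hf_top,
      ENNReal.inv_mul_cancel hN hg_top])
    (fun x y => by
      rw [ENNReal.mul_rpow_of_nonneg _ _ ha.le, ENNReal.mul_rpow_of_nonneg _ _ hb.le,
        mul_mul_mul_comm]
      exact mul_le_mul_right (hfgh x y) c)
  rw [lintegral_const_mul' _ _ hM_inv, lintegral_const_mul' _ _ hN_inv,
    lintegral_const_mul' _ _ hc_top] at hnorm
  rw [← ENNReal.mul_le_mul_iff_right hc hc_top]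
  calc c * ((∫⁻ x, f x) ^ a * (∫⁻ y, g y) ^ b)
      = (M⁻¹ * ∫⁻ x, f x) ^ a * (N⁻¹ * ∫⁻ y, g y) ^ b := by
        rw [ENNReal.mul_rpow_of_nonneg _ _ ha.le, ENNReal.mul_rpow_of_nonneg _ _ hb.le,
          mul_mul_mul_comm]
    _ ≤ ENNReal.ofReal a * (M⁻¹ * ∫⁻ x, f x) +
          ENNReal.ofReal b * (N⁻¹ * ∫⁻ y, g y) :=
        ENNReal.geom_mean_le_arith_mean2_weighted ha hb hab _ _
    _ ≤ c * ∫⁻ z, h z := hnorm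

end Real

theorem Set.smul_preimage_prodMk_add_smul_preimage_prodMk_subset {R X Y : Type*}
    [Add X] [Add Y] [SMul R X] [SMul R Y] (a b : R) (A B : Set (X × Y)) (r s : X) :
    a • (Prod.mk r ⁻¹' A) + b • (Prod.mk s ⁻¹' B) ⊆
      Prod.mk (a • r + b • s) ⁻¹' (a • A + b • B) := by
  rintro _ ⟨_, ⟨x, hx, rfl⟩, _, ⟨y, hy, rfl⟩, rfl⟩
  exact add_mem_add (smul_mem_smul_set (a := a) (show (r, x) ∈ A from hx))
    (smul_mem_smul_set (a := b) (show (s, y) ∈ B from hy))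

def MultiplicativeBrunnMinkowski {E : Type*} [MeasurableSpace E] [Bornology E] [Add E] [SMul ℝ E]
    (μ : Measure E) (a b : ℝ) : Prop :=
  ∀ A B : Set E, Bornology.IsBounded A → Bornology.IsBounded B → MeasurableSet A →
    MeasurableSet B → μ A ^ a * μ B ^ b ≤ μ (a • A + b • B)

namespace MultiplicativeBrunnMinkowski

variable {a b : ℝ}

theorem of_subsingleton {E : Type*} [MeasurableSpace E] [Bornology E] [Add E] [SMul ℝ E]
    [Subsingleton E] (μ : Measure E) (ha : 0 < a) (hb : 0 < b) (hab : a + b = 1) :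
    MultiplicativeBrunnMinkowski μ a b := by
  intro A B _ _ _ _
  rcases A.eq_empty_or_nonempty with rfl | hA
  · simp [ENNReal.zero_rpow_of_pos ha]
  rcases B.eq_empty_or_nonempty with rfl | hB
  · simp [ENNReal.zero_rpow_of_pos hb]
  rw [Subsingleton.eq_univ_of_nonempty (hA.smul_set.add hB.smul_set),
    Subsingleton.eq_univ_of_nonempty hA, Subsingleton.eq_univ_of_nonempty hB,
    ← ENNReal.rpow_add_of_nonneg a b ha.le hb.le, hab, ENNReal.rpow_one]

theorem prod_real {E : Type*} [NormedAddCommGroup E] [NormedSpace ℝ E] [MeasurableSpace E]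
    [ProperSpace E] {μ : Measure E} [SFinite μ] [IsFiniteMeasureOnCompacts μ]
    (ha : 0 < a) (hb : 0 < b) (hab : a + b = 1) (hμ : MultiplicativeBrunnMinkowski μ a b) :
    MultiplicativeBrunnMinkowski ((volume : Measure ℝ).prod μ) a b := by
  intro A B hA hB hAm hBm
  set U := toMeasurable ((volume : Measure ℝ).prod μ) (a • A + b • B)
  have hUm : MeasurableSet U := measurableSet_toMeasurable _ _
  have hfiber_top {S : Set (ℝ × E)} (hS : Bornology.IsBounded S) :
      ⨆ r, μ (Prod.mk r ⁻¹' S) ≠ ∞ :=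
    ne_top_of_le_ne_top hS.image_snd.measure_lt_top.ne
      (iSup_le fun r => measure_mono fun x hx => ⟨(r, x), hx, rfl⟩)
  have hfiber {S : Set (ℝ × E)} (hS : Bornology.IsBounded S) (r : ℝ) :
      Bornology.IsBounded (Prod.mk r ⁻¹' S) :=
    hS.image_snd.subset fun x hx => ⟨(r, x), hx, rfl⟩
  calc ((volume : Measure ℝ).prod μ) A ^ a * ((volume : Measure ℝ).prod μ) B ^ b
      = (∫⁻ r, μ (Prod.mk r ⁻¹' A)) ^ a * (∫⁻ s, μ (Prod.mk s ⁻¹' B)) ^ b := by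
        rw [Measure.prod_apply hAm, Measure.prod_apply hBm]
    _ ≤ ∫⁻ t, μ (Prod.mk t ⁻¹' U) :=
        Real.prekopa_leindler ha hb hab (measurable_measure_prodMk_left hAm)
          (measurable_measure_prodMk_left hBm) (measurable_measure_prodMk_left hUm)
          (hfiber_top hA) (hfiber_top hB) fun r s =>
            (hμ _ _ (hfiber hA r) (hfiber hB s) (measurable_prodMk_left hAm)
              (measurable_prodMk_left hBm)).trans <| measure_mono <|
              (smul_preimage_prodMk_add_smul_preimage_prodMk_subset a b A B r s).trans
                (preimage_mono (subset_toMeasurable _ _))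
    _ = ((volume : Measure ℝ).prod μ) (a • A + b • B) := by
        rw [← Measure.prod_apply hUm, measure_toMeasurable]

theorem map {E F : Type*} [NormedAddCommGroup E] [NormedSpace ℝ E] [MeasurableSpace E]
    [BorelSpace E] [NormedAddCommGroup F] [NormedSpace ℝ F] [MeasurableSpace F] [BorelSpace F]
    {μ : Measure E} (hμ : MultiplicativeBrunnMinkowski μ a b) (L : E ≃L[ℝ] F) :
    MultiplicativeBrunnMinkowski (μ.map L) a b := by
  intro A B hA hB hAm hBm
  have hL : MeasurableEmbedding L := L.toHomeomorph.measurableEmbedding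
  rw [hL.map_apply, hL.map_apply, hL.map_apply, ← L.image_symm_eq_preimage,
    ← L.image_symm_eq_preimage, ← L.image_symm_eq_preimage, image_add, image_smul_set,
    image_smul_set]
  refine hμ _ _ (L.symm.lipschitz.isBounded_image hA) (L.symm.lipschitz.isBounded_image hB) ?_ ?_
  · rw [L.image_symm_eq_preimage]; exact hAm.preimage L.continuous.measurable
  · rw [L.image_symm_eq_preimage]; exact hBm.preimage L.continuous.measurable

end MultiplicativeBrunnMinkowski

theorem multiplicativeBrunnMinkowski_volume_pi (n : ℕ) {a b : ℝ} (ha : 0 < a) (hb : 0 < b)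
    (hab : a + b = 1) : MultiplicativeBrunnMinkowski (volume : Measure (Fin n → ℝ)) a b := by
  induction n with
  | zero => exact .of_subsingleton _ ha hb hab
  | succ n ih =>
    have hcons : ⇑(Fin.consEquivL ℝ fun _ : Fin (n + 1) => ℝ) =
        (MeasurableEquiv.piFinSuccAbove (fun _ : Fin (n + 1) => ℝ) 0).symm := by
      ext p i
      simp [Fin.consEquivL_apply]
    have hvol : volume.map (Fin.consEquivL ℝ fun _ : Fin (n + 1) => ℝ) = volume := by
      rw [hcons]
      exact (volume_preserving_piFinSuccAbove _ 0).symm.map_eq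
    simpa only [← Measure.volume_eq_prod, hvol] using
      (ih.prod_real ha hb hab).map (Fin.consEquivL ℝ fun _ : Fin (n + 1) => ℝ)

theorem brunn_minkowski_multiplicative (n : ℕ) (a b : ℝ) (ha : 0 < a) (hb : 0 < b)
    (hab : a + b = 1) (A B : Set (Fin n → ℝ))
    (hAb : Bornology.IsBounded A) (hBb : Bornology.IsBounded B)
    (hAm : MeasurableSet A) (hBm : MeasurableSet B) :
    volume A ^ a * volume B ^ b ≤ volume (a • A + b • B) :=
  multiplicativeBrunnMinkowski_volume_pi n ha hb hab A B hAb hBb hAm hBm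
end

section
/- Suppose a probability measure μ on ℝⁿ satisfies the modified logarithmic Sobolev inequality Ent_μ(e^g) ≤ ∫ {x·∇g(x) − φ*(∇φ(x)) + φ*(∇φ(x) − ∇g(x))} e^{g(x)} dμ(x) for all smooth g, where φ is C² strictly convex and superlinear. Let Φ = φ + U with U bounded, and let μ_Φ(dx) = e^{−Φ(x)} dx / Z_Φ. Then for all smooth g, Ent_{μ_Φ}(e^g) ≤ e^{2·osc(U)} ∫ {x·∇g(x) − φ*(∇φ(x)) + φ*(∇φ(x) − ∇g(x))} e^{g(x)} dμ_Φ(x), where osc(U) = sup U − inf U. -/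
open Filter MeasureTheory Real
open scoped RealInnerProductSpace ENNReal

/-- The Fenchel–Legendre transform of `φ` on Euclidean space. -/
noncomputable def fenchel {n : ℕ} (φ : EuclideanSpace ℝ (Fin n) → ℝ)
    (y : EuclideanSpace ℝ (Fin n)) : ℝ :=
  ⨆ z : EuclideanSpace ℝ (Fin n), ⟪y, z⟫ - φ z

/-- Entropy of a nonnegative function `F` with respect to a measure `ν`. -/
noncomputable def entropy {n : ℕ} (ν : Measure (EuclideanSpace ℝ (Fin n)))
    (F : EuclideanSpace ℝ (Fin n) → ℝ) : ℝ :=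
  ∫ x, F x * Real.log (F x) ∂ν - (∫ x, F x ∂ν) * Real.log (∫ x, F x ∂ν)

section aux

lemma ent_aux {t a : ℝ} (ht : 0 < t) (ha : 0 < a) :
    0 ≤ t * Real.log t - t * Real.log a - t + a := by
  have h := Real.log_le_sub_one_of_pos (show (0:ℝ) < a / t by positivity)
  rw [Real.log_div ha.ne' ht.ne'] at h
  have := mul_le_mul_of_nonneg_left h ht.le
  have hat : t * (a / t) = a := by field_simp
  nlinarith

lemma ent_aux2 {A B : ℝ} (hA : 0 < A) (hB : 0 < B) :
    A * Real.log B - A * Real.log A ≤ B - A := by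
  have h := Real.log_le_sub_one_of_pos (show (0:ℝ) < B / A by positivity)
  rw [Real.log_div hB.ne' hA.ne'] at h
  have := mul_le_mul_of_nonneg_left h hA.le
  have : A * (B / A) = B := by field_simp
  nlinarith [mul_le_mul_of_nonneg_left h hA.le]

variable {E : Type*} [MeasurableSpace E]

lemma transfer_int {ν₁ ν₂ : Measure E} {r : ℝ} (hle : ν₁ ≤ ENNReal.ofReal r • ν₂)
    {h : E → ℝ} (hint : Integrable h ν₂) : Integrable h ν₁ :=
  (hint.smul_measure ENNReal.ofReal_ne_top).mono_measure hle

lemma int_comp {ν₁ ν₂ : Measure E} {r : ℝ} (hr : 0 ≤ r) (hle : ν₁ ≤ ENNReal.ofReal r • ν₂)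
    {h : E → ℝ} (h0 : ∀ x, 0 ≤ h x) (hint : Integrable h ν₂) :
    ∫ x, h x ∂ν₁ ≤ r * ∫ x, h x ∂ν₂ := by
  have hm1 : AEStronglyMeasurable h ν₁ := (transfer_int hle hint).1
  have hfin : ∫⁻ x, ENNReal.ofReal (h x) ∂ν₂ < ⊤ := by
    have := hint.2
    rw [hasFiniteIntegral_iff_norm] at this
    refine lt_of_le_of_lt (lintegral_mono fun x => ?_) this
    exact ENNReal.ofReal_le_ofReal (le_abs_self _)
  rw [integral_eq_lintegral_of_nonneg_ae (Filter.Eventually.of_forall h0) hm1,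
    integral_eq_lintegral_of_nonneg_ae (Filter.Eventually.of_forall h0) hint.1]
  have hmono : ∫⁻ x, ENNReal.ofReal (h x) ∂ν₁ ≤ ENNReal.ofReal r * ∫⁻ x, ENNReal.ofReal (h x) ∂ν₂ := by
    refine le_trans (lintegral_mono' hle le_rfl) ?_
    rw [lintegral_smul_measure, smul_eq_mul]
  calc (∫⁻ x, ENNReal.ofReal (h x) ∂ν₁).toReal
      ≤ (ENNReal.ofReal r * ∫⁻ x, ENNReal.ofReal (h x) ∂ν₂).toReal := by
        refine ENNReal.toReal_mono ?_ hmono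
        exact ENNReal.mul_ne_top ENNReal.ofReal_ne_top hfin.ne
    _ = r * (∫⁻ x, ENNReal.ofReal (h x) ∂ν₂).toReal := by
        rw [ENNReal.toReal_mul, ENNReal.toReal_ofReal hr]

lemma measure_comp {μ : Measure E} {f₁ f₂ : E → ℝ≥0∞} {r : ℝ≥0∞} (hr : r ≠ ⊤)
    (h : ∀ x, f₁ x ≤ r * f₂ x) : μ.withDensity f₁ ≤ r • μ.withDensity f₂ := by
  rw [← withDensity_smul' r f₂ hr]
  exact withDensity_mono (Filter.Eventually.of_forall h)

end aux

section fenchelaux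

variable {n : ℕ} {φ : EuclideanSpace ℝ (Fin n) → ℝ}

lemma bdd_above_fenchel (hcont : Continuous φ)
    (hsl : Tendsto (fun x => φ x / ‖x‖) (cocompact (EuclideanSpace ℝ (Fin n))) atTop)
    (y : EuclideanSpace ℝ (Fin n)) :
    BddAbove (Set.range fun z => ⟪y, z⟫ - φ z) := by
  have h := hsl.eventually_ge_atTop (‖y‖ + 1)
  rw [Filter.eventually_iff, mem_cocompact] at h
  obtain ⟨K, hK, hKsub⟩ := h
  have hfc : Continuous fun z : EuclideanSpace ℝ (Fin n) => ⟪y, z⟫ - φ z :=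
    (continuous_const.inner continuous_id).sub hcont
  obtain ⟨C, hC⟩ := hK.exists_bound_of_continuousOn hfc.continuousOn
  refine ⟨max C 0, ?_⟩
  rintro v ⟨z, rfl⟩
  by_cases hz : z ∈ K
  · exact le_max_of_le_left ((le_abs_self _).trans (by simpa using hC z hz))
  · have hz' := hKsub hz
    simp only [Set.mem_setOf_eq] at hz'
    have hzz : z ≠ 0 := by
      rintro rfl
      simp only [norm_zero, div_zero] at hz'
      nlinarith [norm_nonneg y]
    have hn : (0:ℝ) < ‖z‖ := by simpa [norm_pos_iff] using hzz
    have h1 : (‖y‖ + 1) * ‖z‖ ≤ φ z := by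
      have := (le_div_iff₀ hn).mp hz'
      linarith [this]
    have h2 : ⟪y, z⟫ ≤ ‖y‖ * ‖z‖ := real_inner_le_norm y z
    refine le_max_of_le_right ?_
    show ⟪y, z⟫ - φ z ≤ 0
    nlinarith

lemma fenchel_convexOn (hcont : Continuous φ)
    (hsl : Tendsto (fun x => φ x / ‖x‖) (cocompact (EuclideanSpace ℝ (Fin n))) atTop) :
    ConvexOn ℝ Set.univ (fenchel φ) := by
  refine ⟨convex_univ, fun y₁ _ y₂ _ a b ha hb hab => ?_⟩
  refine ciSup_le fun z => ?_
  have h1 : ⟪y₁, z⟫ - φ z ≤ fenchel φ y₁ := le_ciSup (bdd_above_fenchel hcont hsl y₁) z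
  have h2 : ⟪y₂, z⟫ - φ z ≤ fenchel φ y₂ := le_ciSup (bdd_above_fenchel hcont hsl y₂) z
  have : ⟪a • y₁ + b • y₂, z⟫ = a * ⟪y₁, z⟫ + b * ⟪y₂, z⟫ := by
    rw [inner_add_left, real_inner_smul_left, real_inner_smul_left]
  rw [this]
  have e1 : a * (⟪y₁, z⟫ - φ z) ≤ a * fenchel φ y₁ := mul_le_mul_of_nonneg_left h1 ha
  have e2 : b * (⟪y₂, z⟫ - φ z) ≤ b * fenchel φ y₂ := mul_le_mul_of_nonneg_left h2 hb
  have : a * φ z + b * φ z = φ z := by rw [← add_mul, hab, one_mul]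
  simp only [smul_eq_mul]
  nlinarith

lemma fenchel_continuous (hcont : Continuous φ)
    (hsl : Tendsto (fun x => φ x / ‖x‖) (cocompact (EuclideanSpace ℝ (Fin n))) atTop) :
    Continuous (fenchel φ) := by
  rw [← continuousOn_univ]
  exact (fenchel_convexOn hcont hsl).continuousOn isOpen_univ

lemma inner_gradient (f : EuclideanSpace ℝ (Fin n) → ℝ) (x v : EuclideanSpace ℝ (Fin n)) :
    ⟪gradient f x, v⟫ = fderiv ℝ f x v := by
  rw [gradient, InnerProductSpace.toDual_symm_apply]

lemma grad_ineq (hC : ContDiff ℝ 2 φ) (hconv' : ConvexOn ℝ Set.univ φ)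
    (x z : EuclideanSpace ℝ (Fin n)) :
    ⟪gradient φ x, z⟫ - φ z ≤ ⟪gradient φ x, x⟫ - φ x := by
  have hdiff : Differentiable ℝ φ := hC.differentiable (by norm_num)
  set L : ℝ →ᵃ[ℝ] EuclideanSpace ℝ (Fin n) := AffineMap.lineMap x z with hL
  have hLapp : ∀ t : ℝ, L t = t • (z - x) + x := fun t => by
    simp [hL, AffineMap.lineMap_apply, vsub_eq_sub, vadd_eq_add]
  have hψconv : ConvexOn ℝ Set.univ (φ ∘ L) := by
    have := hconv'.comp_affineMap L
    simpa using this
  have hline : HasDerivAt (fun t : ℝ => L t) (z - x) 0 := by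
    simp only [hLapp]
    simpa using ((hasDerivAt_id (0:ℝ)).smul_const (z - x)).add_const x
  have hφx : HasFDerivAt φ (fderiv ℝ φ x) (L 0) := by
    rw [show L 0 = x by simp [hLapp]]
    exact (hdiff x).hasFDerivAt
  have hψ : HasDerivAt (φ ∘ L) (fderiv ℝ φ x (z - x)) 0 := hφx.comp_hasDerivAt 0 hline
  have key : fderiv ℝ φ x (z - x) ≤ (φ ∘ L) 1 - (φ ∘ L) 0 := by
    have := hψconv.le_slope_of_hasDerivAt (Set.mem_univ (0:ℝ)) (Set.mem_univ (1:ℝ))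
      one_pos hψ
    rwa [slope_def_field, show ((φ ∘ L) 1 - (φ ∘ L) 0) / (1 - 0) = (φ ∘ L) 1 - (φ ∘ L) 0 by ring_nf] at this
  have hL0 : (φ ∘ L) 0 = φ x := by simp [Function.comp, hLapp]
  have hL1 : (φ ∘ L) 1 = φ z := by simp [Function.comp, hLapp]
  rw [hL0, hL1] at key
  have : ⟪gradient φ x, z⟫ - ⟪gradient φ x, x⟫ = fderiv ℝ φ x (z - x) := by
    rw [inner_gradient, inner_gradient, ← map_sub]
  linarith [key, this.le, this.ge]

lemma continuous_gradient {f : EuclideanSpace ℝ (Fin n) → ℝ} {m : WithTop ℕ∞} (hm : 1 ≤ m)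
    (hf : ContDiff ℝ m f) : Continuous (gradient f) := by
  have : Continuous fun x => fderiv ℝ f x := hf.continuous_fderiv (lt_of_lt_of_le zero_lt_one hm).ne'
  exact (InnerProductSpace.toDual ℝ (EuclideanSpace ℝ (Fin n))).symm.continuous.comp this

lemma gamma_nonneg (hC : ContDiff ℝ 2 φ) (hconv' : ConvexOn ℝ Set.univ φ)
    (hsl : Tendsto (fun x => φ x / ‖x‖) (cocompact (EuclideanSpace ℝ (Fin n))) atTop)
    (g : EuclideanSpace ℝ (Fin n) → ℝ) (x : EuclideanSpace ℝ (Fin n)) :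
    0 ≤ ⟪x, gradient g x⟫ - fenchel φ (gradient φ x) + fenchel φ (gradient φ x - gradient g x) := by
  have h1 : fenchel φ (gradient φ x) ≤ ⟪gradient φ x, x⟫ - φ x :=
    ciSup_le fun z => grad_ineq hC hconv' x z
  have h2 : ⟪gradient φ x - gradient g x, x⟫ - φ x ≤ fenchel φ (gradient φ x - gradient g x) :=
    le_ciSup (bdd_above_fenchel hC.continuous hsl _) x
  have h3 : ⟪gradient φ x - gradient g x, x⟫ = ⟪gradient φ x, x⟫ - ⟪gradient g x, x⟫ :=
    inner_sub_left _ _ _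
  have h4 : ⟪x, gradient g x⟫ = ⟪gradient g x, x⟫ := real_inner_comm _ _
  linarith

end fenchelaux

set_option maxHeartbeats 2000000 in
theorem modified_logSobolev_perturbation (n : ℕ)
    (φ U : EuclideanSpace ℝ (Fin n) → ℝ)
    (hC : ContDiff ℝ 2 φ) (hconv : StrictConvexOn ℝ Set.univ φ)
    (hsl : Tendsto (fun x => φ x / ‖x‖) (cocompact (EuclideanSpace ℝ (Fin n))) atTop)
    (hU : ∃ M, ∀ x, |U x| ≤ M)
    (μφ : Measure (EuclideanSpace ℝ (Fin n)))
    (hμφ : μφ = volume.withDensity fun x => ENNReal.ofReal (Real.exp (-φ x)))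
    (hprob : IsProbabilityMeasure μφ)
    (hmLSI : ∀ g : EuclideanSpace ℝ (Fin n) → ℝ, ContDiff ℝ (⊤ : ℕ∞) g →
      entropy μφ (fun x => Real.exp (g x)) ≤
        ∫ x, (⟪x, gradient g x⟫ - fenchel φ (gradient φ x)
            + fenchel φ (gradient φ x - gradient g x)) * Real.exp (g x) ∂μφ)
    (Z : ℝ) (hZ : Z = ∫ x, Real.exp (-(φ x + U x)))
    (μΦ : Measure (EuclideanSpace ℝ (Fin n)))
    (hμΦ : μΦ = volume.withDensity fun x => ENNReal.ofReal (Real.exp (-(φ x + U x)) / Z)) :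
    ∀ g : EuclideanSpace ℝ (Fin n) → ℝ, ContDiff ℝ (⊤ : ℕ∞) g →
      entropy μΦ (fun x => Real.exp (g x)) ≤
        Real.exp (2 * ((⨆ x, U x) - ⨅ x, U x)) *
          ∫ x, (⟪x, gradient g x⟫ - fenchel φ (gradient φ x)
              + fenchel φ (gradient φ x - gradient g x)) * Real.exp (g x) ∂μΦ := by
  intro g hg
  obtain ⟨M, hM⟩ := hU
  set Ms : ℝ := ⨆ x, U x with hMs
  set mi : ℝ := ⨅ x, U x with hmi
  have hbddA : BddAbove (Set.range U) := ⟨M, by rintro v ⟨x, rfl⟩; exact (abs_le.mp (hM x)).2⟩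
  have hbddB : BddBelow (Set.range U) := ⟨-M, by rintro v ⟨x, rfl⟩; exact (abs_le.mp (hM x)).1⟩
  have hUle : ∀ x, U x ≤ Ms := fun x => le_ciSup hbddA x
  have hUge : ∀ x, mi ≤ U x := fun x => ciInf_le hbddB x
  have hosc : 0 ≤ Ms - mi := by
    have := hUle 0; have := hUge 0; linarith
  set r : ℝ := Real.exp (Ms - mi) with hr
  have hr1 : 1 ≤ r := by rw [hr]; nlinarith [Real.add_one_le_exp (Ms - mi)]
  have hr0 : 0 ≤ r := by linarith
  set Γ : EuclideanSpace ℝ (Fin n) → ℝ := fun x =>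
    ⟪x, gradient g x⟫ - fenchel φ (gradient φ x) + fenchel φ (gradient φ x - gradient g x)
    with hΓ
  have hΓ0 : ∀ x, 0 ≤ Γ x := gamma_nonneg hC hconv.convexOn hsl g
  have hΓcont : Continuous Γ := by
    have h1 : Continuous fun x : EuclideanSpace ℝ (Fin n) => gradient g x :=
      continuous_gradient (by simp) hg
    have h2 : Continuous fun x : EuclideanSpace ℝ (Fin n) => gradient φ x :=
      continuous_gradient (by norm_num) hC
    have h3 := fenchel_continuous hC.continuous hsl
    exact ((continuous_id.inner h1).sub (h3.comp h2)).add (h3.comp (h2.sub h1))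
  set D : ℝ := ∫ x, Γ x * Real.exp (g x) ∂μΦ with hD
  have hD0 : 0 ≤ D := integral_nonneg fun x => mul_nonneg (hΓ0 x) (Real.exp_pos _).le
  -- the goal restated
  show entropy μΦ (fun x => Real.exp (g x)) ≤ Real.exp (2 * (Ms - mi)) * D
  have hrr : Real.exp (2 * (Ms - mi)) = r * r := by
    rw [hr, ← Real.exp_add]; ring_nf
  by_cases hint : Integrable (fun x => Real.exp (-(φ x + U x))) volume
  case neg =>
    -- Z = 0, μΦ = 0
    have hZ0 : Z = 0 := by rw [hZ, integral_undef hint]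
    have hμΦ0 : μΦ = 0 := by
      rw [hμΦ, hZ0]
      simp [div_zero]
    rw [hμΦ0]
    simp only [entropy, integral_zero_measure, Real.log_zero, mul_zero, sub_zero, zero_mul, sub_self]
    exact mul_nonneg (Real.exp_pos _).le hD0
  case pos =>
  -- basic facts about e^{-φ}
  have hφmeas : Measurable fun x => ENNReal.ofReal (Real.exp (-φ x)) :=
    (ENNReal.measurable_ofReal.comp (Real.measurable_exp.comp hC.continuous.measurable.neg))
  have hφlint : ∫⁻ x, ENNReal.ofReal (Real.exp (-φ x)) = 1 := by
    have := hprob.measure_univ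
    rw [hμφ] at this
    rwa [withDensity_apply _ MeasurableSet.univ, Measure.restrict_univ] at this
  have hφint : Integrable (fun x => Real.exp (-φ x)) volume := by
    refine ⟨(Real.continuous_exp.comp hC.continuous.neg).aestronglyMeasurable, ?_⟩
    rw [hasFiniteIntegral_iff_norm]
    have : ∀ x : EuclideanSpace ℝ (Fin n), ENNReal.ofReal ‖Real.exp (-φ x)‖ = ENNReal.ofReal (Real.exp (-φ x)) := by
      intro x; rw [Real.norm_eq_abs, abs_of_pos (Real.exp_pos _)]
    simp only [this, hφlint]
    exact ENNReal.one_lt_top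
  have hφI : ∫ x, Real.exp (-φ x) = 1 := by
    rw [integral_eq_lintegral_of_nonneg_ae (Filter.Eventually.of_forall fun x => (Real.exp_pos _).le) hφint.1]
    simp [hφlint]
  -- bounds on the density and on Z
  have hd1 : ∀ x : EuclideanSpace ℝ (Fin n),
      Real.exp (-Ms) * Real.exp (-φ x) ≤ Real.exp (-(φ x + U x)) := by
    intro x
    rw [← Real.exp_add]
    exact Real.exp_le_exp.mpr (by linarith [hUle x])
  have hd2 : ∀ x : EuclideanSpace ℝ (Fin n),
      Real.exp (-(φ x + U x)) ≤ Real.exp (-mi) * Real.exp (-φ x) := by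
    intro x
    rw [← Real.exp_add]
    exact Real.exp_le_exp.mpr (by linarith [hUge x])
  have hZl : Real.exp (-Ms) ≤ Z := by
    rw [hZ]
    calc Real.exp (-Ms) = ∫ x, Real.exp (-Ms) * Real.exp (-φ x) := by
          rw [integral_const_mul, hφI, mul_one]
      _ ≤ ∫ x, Real.exp (-(φ x + U x)) := integral_mono (hφint.const_mul _) hint hd1
  have hZu : Z ≤ Real.exp (-mi) := by
    rw [hZ]
    calc ∫ x, Real.exp (-(φ x + U x)) ≤ ∫ x, Real.exp (-mi) * Real.exp (-φ x) :=
          integral_mono hint (hφint.const_mul _) hd2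
      _ = Real.exp (-mi) := by rw [integral_const_mul, hφI, mul_one]
  have hZ0 : 0 < Z := lt_of_lt_of_le (Real.exp_pos _) hZl
  -- measure comparisons
  have M1 : μΦ ≤ ENNReal.ofReal r • μφ := by
    rw [hμΦ, hμφ]
    refine measure_comp ENNReal.ofReal_ne_top fun x => ?_
    rw [← ENNReal.ofReal_mul hr0]
    refine ENNReal.ofReal_le_ofReal ?_
    rw [div_le_iff₀ hZ0]
    calc Real.exp (-(φ x + U x)) ≤ Real.exp (-mi) * Real.exp (-φ x) := hd2 x
      _ = (r * Real.exp (-φ x)) * Real.exp (-Ms) := by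
          simp only [hr, ← Real.exp_add]; ring_nf
      _ ≤ (r * Real.exp (-φ x)) * Z := by
          refine mul_le_mul_of_nonneg_left hZl (by positivity)
  have M2 : μφ ≤ ENNReal.ofReal r • μΦ := by
    rw [hμΦ, hμφ]
    refine measure_comp ENNReal.ofReal_ne_top fun x => ?_
    rw [← ENNReal.ofReal_mul hr0]
    refine ENNReal.ofReal_le_ofReal ?_
    rw [← mul_div_assoc, le_div_iff₀ hZ0]
    calc Real.exp (-φ x) * Z ≤ Real.exp (-φ x) * Real.exp (-mi) := by
          exact mul_le_mul_of_nonneg_left hZu (Real.exp_pos _).le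
      _ = r * (Real.exp (-Ms) * Real.exp (-φ x)) := by
          simp only [hr, ← Real.exp_add]; ring_nf
      _ ≤ r * Real.exp (-(φ x + U x)) := by
          exact mul_le_mul_of_nonneg_left (hd1 x) hr0
  -- μΦ is a probability measure
  have hprobΦ : IsProbabilityMeasure μΦ := by
    constructor
    rw [hμΦ, withDensity_apply _ MeasurableSet.univ, Measure.restrict_univ]
    rw [← ofReal_integral_eq_lintegral_ofReal (hint.div_const Z)
      (Filter.Eventually.of_forall fun x => by positivity)]
    rw [integral_div, ← hZ, div_self hZ0.ne']
    exact ENNReal.ofReal_one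
  haveI := hprobΦ
  have hFcont : Continuous fun x => Real.exp (g x) := Real.continuous_exp.comp hg.continuous
  have hFlogF : ∀ ν : Measure (EuclideanSpace ℝ (Fin n)),
      ∫ x, Real.exp (g x) * Real.log (Real.exp (g x)) ∂ν = ∫ x, g x * Real.exp (g x) ∂ν :=
    fun ν => integral_congr_ae (Filter.Eventually.of_forall fun x => by
      show Real.exp (g x) * Real.log (Real.exp (g x)) = g x * Real.exp (g x)
      rw [Real.log_exp]; ring)
  by_cases hFint : Integrable (fun x => Real.exp (g x)) μΦ
  case neg =>
    have hgegn : ¬ Integrable (fun x => g x * Real.exp (g x)) μΦ := by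
      intro hcontr
      apply hFint
      refine Integrable.mono (g := fun x => |g x * Real.exp (g x)| + Real.exp 1)
        (hcontr.abs.add (integrable_const _)) hFcont.aestronglyMeasurable
        (Filter.Eventually.of_forall fun x => ?_)
      have hb : Real.exp (g x) ≤ |g x * Real.exp (g x)| + Real.exp 1 := by
        rcases le_or_gt (g x) 1 with h | h
        · have h1 := Real.exp_le_exp.mpr h
          have h2 := abs_nonneg (g x * Real.exp (g x))
          linarith
        · have h1 : Real.exp (g x) ≤ g x * Real.exp (g x) :=
            le_mul_of_one_le_left (Real.exp_pos _).le h.le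
          have h2 := le_abs_self (g x * Real.exp (g x))
          have h3 := Real.exp_pos 1
          linarith
      rw [Real.norm_eq_abs, Real.norm_eq_abs, abs_of_pos (Real.exp_pos _),
        abs_of_nonneg (by positivity)]
      exact hb
    have e1 : ∫ x, Real.exp (g x) * Real.log (Real.exp (g x)) ∂μΦ = 0 := by
      rw [hFlogF μΦ]; exact integral_undef hgegn
    have e2 : ∫ x, Real.exp (g x) ∂μΦ = 0 := integral_undef hFint
    unfold entropy
    rw [e1, e2]
    simp only [Real.log_zero, mul_zero, sub_zero, zero_mul, sub_self]
    exact mul_nonneg (Real.exp_pos _).le hD0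
  case pos =>
  have hFφ : Integrable (fun x => Real.exp (g x)) μφ := transfer_int M2 hFint
  have hApos : 0 < ∫ x, Real.exp (g x) ∂μΦ := integral_exp_pos hFint
  have hBpos : 0 < ∫ x, Real.exp (g x) ∂μφ := integral_exp_pos hFφ
  by_cases hgegφ : Integrable (fun x => g x * Real.exp (g x)) μφ
  case neg =>
    exfalso
    set C : ℝ := ∫ x, Γ x * Real.exp (g x) ∂μφ with hCdef
    set B : ℝ := ∫ x, Real.exp (g x) ∂μφ with hBdef
    set c : ℝ := (C + B * Real.log B) / B + 1 with hc
    have hgc : ContDiff ℝ (⊤ : ℕ∞) (fun x => g x - c) := hg.sub contDiff_const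
    have hgrad : gradient (fun y => g y - c) = gradient g := by
      funext x
      unfold gradient
      rw [fderiv_sub_const]
    have hlsi := hmLSI (fun x => g x - c) hgc
    rw [hgrad] at hlsi
    have hlsi' : entropy μφ (fun x => Real.exp (g x - c)) ≤
        ∫ x, Γ x * Real.exp (g x - c) ∂μφ := hlsi
    have hexpc : ∀ x, Real.exp (g x - c) = Real.exp (-c) * Real.exp (g x) := fun x => by
      rw [← Real.exp_add]; ring_nf
    have hent : entropy μφ (fun x => Real.exp (g x - c)) =
        -((Real.exp (-c) * B) * Real.log (Real.exp (-c) * B)) := by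
      unfold entropy
      have h1 : ∫ x, Real.exp (g x - c) * Real.log (Real.exp (g x - c)) ∂μφ = 0 := by
        apply integral_undef
        intro hcontr
        apply hgegφ
        have heq : (fun x => g x * Real.exp (g x)) = fun x =>
            Real.exp c * (Real.exp (g x - c) * Real.log (Real.exp (g x - c))) +
              c * Real.exp (g x) := by
          funext x
          rw [Real.log_exp]
          have hE : Real.exp c * Real.exp (g x - c) = Real.exp (g x) := by
            rw [← Real.exp_add]; ring_nf
          linear_combination (c - g x) * hE
        rw [heq]
        exact (hcontr.const_mul _).add (hFφ.const_mul c)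
      rw [h1]
      have h2 : ∫ x, Real.exp (g x - c) ∂μφ = Real.exp (-c) * B := by
        rw [show (fun x => Real.exp (g x - c)) = fun x => Real.exp (-c) * Real.exp (g x) from
          funext hexpc, integral_const_mul, ← hBdef]
      rw [h2]
      ring
    have h3 : ∫ x, Γ x * Real.exp (g x - c) ∂μφ = Real.exp (-c) * C := by
      rw [show (fun x => Γ x * Real.exp (g x - c)) = fun x =>
          Real.exp (-c) * (Γ x * Real.exp (g x)) from funext fun x => by rw [hexpc x]; ring,
        integral_const_mul, ← hCdef]
    rw [hent, h3] at hlsi'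
    have hlogm : Real.log (Real.exp (-c) * B) = -c + Real.log B := by
      rw [Real.log_mul (Real.exp_ne_zero _) hBpos.ne', Real.log_exp]
    rw [hlogm] at hlsi'
    have h5 := mul_le_mul_of_nonneg_left hlsi' (Real.exp_pos c).le
    have h6 : Real.exp c * Real.exp (-c) = 1 := by rw [← Real.exp_add]; norm_num
    have hkey : B * c - B * Real.log B ≤ C := by nlinarith [h5, h6]
    have hBc : B * c = C + B * Real.log B + B := by
      rw [hc]
      field_simp
    nlinarith [hBpos, hkey, hBc]
  case pos =>
  have hgegΦ : Integrable (fun x => g x * Real.exp (g x)) μΦ := transfer_int M1 hgegφ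
  set B : ℝ := ∫ x, Real.exp (g x) ∂μφ with hBdef
  set A : ℝ := ∫ x, Real.exp (g x) ∂μΦ with hAdef
  set hbf : EuclideanSpace ℝ (Fin n) → ℝ :=
    fun x => g x * Real.exp (g x) - Real.log B * Real.exp (g x) - Real.exp (g x) + B with hbfdef
  have hbf0 : ∀ x, 0 ≤ hbf x := by
    intro x
    have h := ent_aux (Real.exp_pos (g x)) hBpos
    rw [Real.log_exp] at h
    simp only [hbfdef]
    linarith [h]
  have hbfφ : Integrable hbf μφ := by
    simp only [hbfdef]
    exact (((hgegφ.sub (hFφ.const_mul (Real.log B))).sub hFφ).add (integrable_const B))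
  have hbfΦ : Integrable hbf μΦ := by
    simp only [hbfdef]
    exact (((hgegΦ.sub (hFint.const_mul (Real.log B))).sub hFint).add (integrable_const B))
  have hsub2φ : Integrable (fun x => g x * Real.exp (g x) - Real.log B * Real.exp (g x)) μφ := by
    exact hgegφ.sub (hFφ.const_mul (Real.log B))
  have hsub3φ : Integrable
      (fun x => g x * Real.exp (g x) - Real.log B * Real.exp (g x) - Real.exp (g x)) μφ := by
    exact hsub2φ.sub hFφ
  have hsub2Φ : Integrable (fun x => g x * Real.exp (g x) - Real.log B * Real.exp (g x)) μΦ := by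
    exact hgegΦ.sub (hFint.const_mul (Real.log B))
  have hsub3Φ : Integrable
      (fun x => g x * Real.exp (g x) - Real.log B * Real.exp (g x) - Real.exp (g x)) μΦ := by
    exact hsub2Φ.sub hFint
  have hIφ : ∫ x, hbf x ∂μφ = (∫ x, g x * Real.exp (g x) ∂μφ) - Real.log B * B - B + B := by
    simp only [hbfdef]
    rw [integral_add hsub3φ (integrable_const B),
      integral_sub hsub2φ hFφ,
      integral_sub hgegφ (hFφ.const_mul (Real.log B)),
      integral_const_mul, integral_const, ← hBdef]
    simp [measure_univ]
  have hIΦ : ∫ x, hbf x ∂μΦ = (∫ x, g x * Real.exp (g x) ∂μΦ) - Real.log B * A - A + B := by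
    simp only [hbfdef]
    rw [integral_add hsub3Φ (integrable_const B),
      integral_sub hsub2Φ hFint,
      integral_sub hgegΦ (hFint.const_mul (Real.log B)),
      integral_const_mul, integral_const, ← hAdef]
    simp [measure_univ]
  have hentφ : entropy μφ (fun x => Real.exp (g x)) =
      (∫ x, g x * Real.exp (g x) ∂μφ) - B * Real.log B := by
    unfold entropy
    rw [hFlogF μφ, ← hBdef]
  have hentΦ : entropy μΦ (fun x => Real.exp (g x)) =
      (∫ x, g x * Real.exp (g x) ∂μΦ) - A * Real.log A := by
    unfold entropy
    rw [hFlogF μΦ, ← hAdef]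
  have step1 : entropy μΦ (fun x => Real.exp (g x)) ≤ ∫ x, hbf x ∂μΦ := by
    rw [hentΦ, hIΦ]
    have := ent_aux2 hApos hBpos
    linarith
  have step2 : ∫ x, hbf x ∂μΦ ≤ r * ∫ x, hbf x ∂μφ := int_comp hr0 M1 hbf0 hbfφ
  have step3 : ∫ x, hbf x ∂μφ = entropy μφ (fun x => Real.exp (g x)) := by
    rw [hentφ, hIφ]; ring
  have step4 : entropy μφ (fun x => Real.exp (g x)) ≤ ∫ x, Γ x * Real.exp (g x) ∂μφ :=
    hmLSI g hg
  by_cases hGF : Integrable (fun x => Γ x * Real.exp (g x)) μΦ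
  case pos =>
    have step5 : ∫ x, Γ x * Real.exp (g x) ∂μφ ≤ r * D := by
      rw [hD]
      exact int_comp hr0 M2 (fun x => mul_nonneg (hΓ0 x) (Real.exp_pos _).le) hGF
    rw [hrr]
    calc entropy μΦ (fun x => Real.exp (g x)) ≤ ∫ x, hbf x ∂μΦ := step1
      _ ≤ r * ∫ x, hbf x ∂μφ := step2
      _ = r * entropy μφ (fun x => Real.exp (g x)) := by rw [step3]
      _ ≤ r * (r * D) := mul_le_mul_of_nonneg_left (le_trans step4 step5) hr0
      _ = r * r * D := by ring
  case neg =>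
    have hGFφ : ¬ Integrable (fun x => Γ x * Real.exp (g x)) μφ := fun h => hGF (transfer_int M1 h)
    have hC0 : ∫ x, Γ x * Real.exp (g x) ∂μφ = 0 := integral_undef hGFφ
    rw [hC0] at step4
    calc entropy μΦ (fun x => Real.exp (g x)) ≤ ∫ x, hbf x ∂μΦ := step1
      _ ≤ r * ∫ x, hbf x ∂μφ := step2
      _ = r * entropy μφ (fun x => Real.exp (g x)) := by rw [step3]
      _ ≤ r * 0 := mul_le_mul_of_nonneg_left step4 hr0
      _ = 0 := by ring
      _ ≤ Real.exp (2 * (Ms - mi)) * D := mul_nonneg (Real.exp_pos _).le hD0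
end

section
/- Let p ≥ 2, q = p/(p−1), and Φ(x) = ‖x‖^p / p on ℝⁿ, where ‖·‖ is the Euclidean norm. Then there exists a constant c > 0 such that for all x, y ∈ ℝⁿ, x·y − Φ*(∇Φ(x)) + Φ*(∇Φ(x) − y) ≤ c ‖y‖^q, where Φ*(x) = ‖x‖^q / q is the Fenchel–Legendre conjugate of Φ. -/
open scoped RealInnerProductSpace

/-!
With `g = ∇Φ(x) = ‖x‖^(p-2) • x`, the map `x ↦ ‖x‖^(p-2) • x` is inverted by
`g ↦ ‖g‖^(q-2) • g` because `(p - 1)(q - 1) = 1`, so the left-hand side equals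
`⟪‖g‖^(q-2) • g, y⟫ - ‖g‖^q/q + ‖g - y‖^q/q`. If `‖g‖ ≤ ‖y‖`, Cauchy–Schwarz and the triangle
inequality bound each term by a multiple of `‖y‖^q`. If `‖y‖ < ‖g‖`, concavity of `t ↦ t^(q/2)`
(here `q ≤ 2`) bounds `‖g - y‖^q = (‖g‖² - 2⟪g, y⟫ + ‖y‖²)^(q/2)` by its tangent at `‖g‖²`, whose
linear part cancels the inner product and leaves `‖g‖^(q-2) ‖y‖² / 2 ≤ ‖y‖^q / 2`.
-/

lemma Real.rpow_le_tangent_of_le_one {A B r : ℝ} (hA : 0 < A) (hB : 0 ≤ B) (hr₀ : 0 ≤ r)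
    (hr₁ : r ≤ 1) : B ^ r ≤ A ^ r + r * A ^ (r - 1) * (B - A) := by
  have hbern := rpow_one_add_le_one_add_mul_self (s := B / A - 1)
    (by linarith [div_nonneg hB hA.le]) hr₀ hr₁
  rw [add_sub_cancel, Real.div_rpow hB hA.le, div_le_iff₀ (by positivity)] at hbern
  calc B ^ r ≤ (1 + r * (B / A - 1)) * A ^ r := hbern
    _ = A ^ r + r * A ^ (r - 1) * (B - A) := by
      rw [Real.rpow_sub_one hA.ne']
      field_simp

section DualityMap

variable {E : Type*} [NormedAddCommGroup E] [InnerProductSpace ℝ E]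

noncomputable def powDualityMap (p : ℝ) (x : E) : E := ‖x‖ ^ (p - 2) • x

lemma norm_powDualityMap {p : ℝ} (hp : p ≠ 1) (x : E) :
    ‖powDualityMap p x‖ = ‖x‖ ^ (p - 1) := by
  rcases eq_or_ne x 0 with rfl | hx
  · simp [powDualityMap, Real.zero_rpow (sub_ne_zero.mpr hp)]
  · rw [powDualityMap, norm_smul, Real.norm_of_nonneg (by positivity),
      ← Real.rpow_add_one (norm_ne_zero_iff.mpr hx)]
    ring_nf

lemma powDualityMap_powDualityMap {p q : ℝ} (hpq : (p - 1) * (q - 1) = 1) (x : E) :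
    powDualityMap q (powDualityMap p x) = x := by
  rcases eq_or_ne x 0 with rfl | hx
  · simp [powDualityMap]
  have hp : p ≠ 1 := by rintro rfl; simp at hpq
  have hx' : 0 < ‖x‖ := norm_pos_iff.mpr hx
  rw [powDualityMap, norm_powDualityMap hp, powDualityMap, smul_smul,
    ← Real.rpow_mul hx'.le, ← Real.rpow_add hx',
    show (p - 1) * (q - 2) + (p - 2) = 0 by linear_combination hpq,
    Real.rpow_zero, one_smul]

lemma hasGradientAt_norm_rpow_div [CompleteSpace E] {p : ℝ} (hp : 1 < p) (x : E) :
    HasGradientAt (fun z : E => ‖z‖ ^ p / p) (powDualityMap p x) x := by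
  have hderiv : InnerProductSpace.toDual ℝ E (powDualityMap p x)
      = p⁻¹ • (p * ‖x‖ ^ (p - 2)) • innerSL ℝ x := by
    ext v
    simp only [powDualityMap, map_smul, smul_apply,
      InnerProductSpace.toDual_apply_apply, smul_eq_mul, coe_innerSL_apply]
    field_simp
  rw [hasGradientAt_iff_hasFDerivAt, hderiv]
  simpa only [Pi.smul_def, smul_eq_mul, inv_mul_eq_div] using
    (hasFDerivAt_norm_rpow x hp).const_smul p⁻¹

lemma inner_powDualityMap_sub_le_of_ne_zero {q : ℝ} (hq₀ : 0 < q) (hq₂ : q ≤ 2) {g : E}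
    (hg : g ≠ 0) (y : E) :
    ⟪powDualityMap q g, y⟫ - ‖g‖ ^ q / q + ‖g - y‖ ^ q / q ≤ ‖g‖ ^ (q - 2) * ‖y‖ ^ 2 / 2 := by
  have htangent := Real.rpow_le_tangent_of_le_one (A := ‖g‖ ^ 2) (B := ‖g - y‖ ^ 2)
    (r := q / 2) (by positivity) (by positivity) (by positivity) (by linarith)
  have hsq : ∀ s : ℝ, ∀ t : ℝ, 0 ≤ t → (t ^ 2) ^ s = t ^ (2 * s) := fun s t ht => by
    rw [← Real.rpow_natCast_mul ht]; norm_num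
  rw [hsq _ _ (norm_nonneg _), hsq _ _ (norm_nonneg _), hsq _ _ (norm_nonneg _),
    mul_div_cancel₀ _ two_ne_zero, show 2 * (q / 2 - 1) = q - 2 by ring, norm_sub_sq_real,
    ← div_le_div_iff_of_pos_right hq₀, add_div,
    show q / 2 * ‖g‖ ^ (q - 2) * (‖g‖ ^ 2 - 2 * ⟪g, y⟫ + ‖y‖ ^ 2 - ‖g‖ ^ 2) / q
      = ‖g‖ ^ (q - 2) * ‖y‖ ^ 2 / 2 - ‖g‖ ^ (q - 2) * ⟪g, y⟫ by field_simp; ring] at htangent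
  rw [powDualityMap, real_inner_smul_left]
  linarith

lemma inner_powDualityMap_sub_le_of_norm_lt {q : ℝ} (hq₀ : 0 < q) (hq₂ : q ≤ 2) {g y : E}
    (hyg : ‖y‖ < ‖g‖) :
    ⟪powDualityMap q g, y⟫ - ‖g‖ ^ q / q + ‖g - y‖ ^ q / q ≤ ‖y‖ ^ q / 2 := by
  have hg : g ≠ 0 := norm_pos_iff.mp ((norm_nonneg y).trans_lt hyg)
  refine (inner_powDualityMap_sub_le_of_ne_zero hq₀ hq₂ hg y).trans ?_
  gcongr
  rcases eq_or_ne y 0 with rfl | hy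
  · simp [Real.zero_rpow hq₀.ne']
  have hy' : 0 < ‖y‖ := norm_pos_iff.mpr hy
  calc ‖g‖ ^ (q - 2) * ‖y‖ ^ 2 ≤ ‖y‖ ^ (q - 2) * ‖y‖ ^ 2 :=
        mul_le_mul_of_nonneg_right (Real.rpow_le_rpow_of_nonpos hy' hyg.le (by linarith))
          (by positivity)
    _ = ‖y‖ ^ q := by
        rw [← Real.rpow_natCast, ← Real.rpow_add hy']
        norm_num

lemma inner_powDualityMap_sub_le_of_norm_le {q : ℝ} (hq₁ : 1 < q) (hq₂ : q ≤ 2) {g y : E}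
    (hgy : ‖g‖ ≤ ‖y‖) :
    ⟪powDualityMap q g, y⟫ - ‖g‖ ^ q / q + ‖g - y‖ ^ q / q ≤ 5 * ‖y‖ ^ q := by
  have hinner : ⟪powDualityMap q g, y⟫ ≤ ‖y‖ ^ q :=
    calc ⟪powDualityMap q g, y⟫ ≤ ‖g‖ ^ (q - 1) * ‖y‖ := by
          rw [← norm_powDualityMap hq₁.ne']
          exact real_inner_le_norm _ _
      _ ≤ ‖y‖ ^ (q - 1) * ‖y‖ := by gcongr
      _ = ‖y‖ ^ q := by
          rw [← Real.rpow_add_one' (norm_nonneg _) (by linarith), sub_add_cancel]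
  have hsub : ‖g - y‖ ^ q / q ≤ 4 * ‖y‖ ^ q :=
    calc ‖g - y‖ ^ q / q ≤ ‖g - y‖ ^ q := div_le_self (by positivity) hq₁.le
      _ ≤ (2 * ‖y‖) ^ q := by gcongr; linarith [norm_sub_le g y]
      _ = 2 ^ q * ‖y‖ ^ q := Real.mul_rpow zero_le_two (norm_nonneg _)
      _ ≤ 2 ^ (2 : ℝ) * ‖y‖ ^ q := by gcongr; exact one_le_two
      _ = 4 * ‖y‖ ^ q := by norm_num
  have hmid : 0 ≤ ‖g‖ ^ q / q := by positivity
  linarith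

lemma inner_powDualityMap_sub_le {q : ℝ} (hq₁ : 1 < q) (hq₂ : q ≤ 2) (g y : E) :
    ⟪powDualityMap q g, y⟫ - ‖g‖ ^ q / q + ‖g - y‖ ^ q / q ≤ 5 * ‖y‖ ^ q := by
  rcases le_or_gt ‖g‖ ‖y‖ with hgy | hyg
  · exact inner_powDualityMap_sub_le_of_norm_le hq₁ hq₂ hgy
  · have := inner_powDualityMap_sub_le_of_norm_lt (by linarith) hq₂ hyg
    linarith [Real.rpow_nonneg (norm_nonneg y) q]

end DualityMap

theorem bobkov_ledoux_power_bound (n : ℕ) (p q : ℝ) (hp : 2 ≤ p) (hq : q = p / (p - 1)) :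
    ∃ c > (0:ℝ), ∀ x y : EuclideanSpace ℝ (Fin n),
      ⟪x, y⟫ - ‖gradient (fun z : EuclideanSpace ℝ (Fin n) => ‖z‖ ^ p / p) x‖ ^ q / q
        + ‖gradient (fun z : EuclideanSpace ℝ (Fin n) => ‖z‖ ^ p / p) x - y‖ ^ q / q
      ≤ c * ‖y‖ ^ q := by
  have hp₁ : 0 < p - 1 := by linarith
  have hq₁ : 1 < q := by rw [hq, lt_div_iff₀ hp₁]; linarith
  have hq₂ : q ≤ 2 := by rw [hq, div_le_iff₀ hp₁]; linarith
  have hpq : (p - 1) * (q - 1) = 1 := by rw [hq]; field_simp; ring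
  refine ⟨5, by norm_num, fun x y => ?_⟩
  have hbound := inner_powDualityMap_sub_le hq₁ hq₂ (powDualityMap p x) y
  rwa [powDualityMap_powDualityMap hpq, ← (hasGradientAt_norm_rpow_div (by linarith) x).gradient]
    at hbound
end
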